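/- arXiv:2407.18400 — 7 statements merged into one kernel-verified Lean document; each statement's English description precedes it below -/
import Mathlib

section
/- Let A be an m×m complex Hurwitz matrix. Then the matrix exponential exp(t·A) tends to the zero matrix as t → ∞; in particular, for every vector x₀ ∈ ℂᵐ, exp(t·A)·x₀ → 0 as t → ∞. -/
open Matrix Polynomial Filter Topology

def IsHurwitz {n : Type*} [Fintype n] [DecidableEq n] (A : Matrix n n ℂ) : Prop :=
  ∀ μ : ℂ, A.charpoly.IsRoot μ → μ.re < 0

/-!
`ℂⁿ` is spanned by the generalized eigenspaces of `A`. If `(A - μ • 1) ^ K x = 0`, then, since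
`μ • 1` commutes with `N = A - μ • 1`, `exp (t • A) x = e^{tμ} ∑_{k<K} t^k / k! • N^k x`. Each term
is `O(t^k e^{t re μ})`, which tends to `0` because `μ` is an eigenvalue, so `re μ < 0`.
Convergence on the standard basis vectors is convergence of the columns, hence of the matrix.
-/

open scoped Nat

theorem Complex.tendsto_exp_mul_mul_pow_atTop_nhds_zero {μ : ℂ} (hμ : μ.re < 0) (k : ℕ) :
    Tendsto (fun t : ℝ => Complex.exp (t * μ) * (t : ℂ) ^ k) atTop (𝓝 0) := by
  rw [tendsto_zero_iff_norm_tendsto_zero]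
  refine (tendsto_rpow_mul_exp_neg_mul_atTop_nhds_zero k (-μ.re) (by linarith)).congr' ?_
  filter_upwards [eventually_ge_atTop 0] with t ht
  rw [norm_mul, Complex.norm_exp, norm_pow, Complex.norm_real, Real.norm_of_nonneg ht,
    Real.rpow_natCast]
  simp [mul_comm]

namespace Matrix

variable {n : Type*} [Fintype n] [DecidableEq n]

theorem exp_mulVec_eq_sum_of_pow_mulVec_eq_zero {N : Matrix n n ℂ} {x : n → ℂ} {K : ℕ}
    (hx : N ^ K *ᵥ x = 0) :
    NormedSpace.exp N *ᵥ x = ∑ k ∈ Finset.range K, (k !⁻¹ : ℂ) • (N ^ k *ᵥ x) := by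
  have hseries : HasSum (fun k => ((k !⁻¹ : ℂ) • N ^ k) *ᵥ x) (NormedSpace.exp N *ᵥ x) := by
    open scoped Norms.Operator in
    exact (NormedSpace.exp_series_hasSum_exp' (𝕂 := ℂ) N).map (mulVec.addMonoidHomLeft x)
        (continuous_id.matrix_mulVec continuous_const)
  simp only [smul_mulVec] at hseries
  refine hseries.unique (hasSum_sum_of_ne_finset_zero fun k hk => ?_)
  rw [Finset.mem_range, not_lt] at hk
  rw [← Nat.sub_add_cancel hk, pow_add, ← mulVec_mulVec, hx, mulVec_zero, smul_zero]

theorem exp_smul_mulVec_eq_sum (A : Matrix n n ℂ) (μ : ℂ) {x : n → ℂ} {K : ℕ}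
    (hx : (A - μ • 1) ^ K *ᵥ x = 0) (t : ℂ) :
    NormedSpace.exp (t • A) *ᵥ x =
      ∑ k ∈ Finset.range K, (Complex.exp (t * μ) * t ^ k / k !) • ((A - μ • 1) ^ k *ᵥ x) := by
  set N := A - μ • 1
  have hsplit : t • A = algebraMap ℂ _ (t * μ) + t • N := by
    rw [Algebra.algebraMap_eq_smul_one, smul_sub, smul_smul]; abel
  have hexp_scalar : NormedSpace.exp (algebraMap ℂ (Matrix n n ℂ) (t * μ)) =
      algebraMap ℂ _ (Complex.exp (t * μ)) := by
    open scoped Norms.Operator in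
    rw [Complex.exp_eq_exp_ℂ]; exact (NormedSpace.algebraMap_exp_comm _).symm
  have hNx : (t • N) ^ K *ᵥ x = 0 := by rw [_root_.smul_pow, smul_mulVec, hx, smul_zero]
  rw [hsplit, exp_add_of_commute _ _ (Algebra.commute_algebraMap_left _ _), hexp_scalar,
    ← mulVec_mulVec, exp_mulVec_eq_sum_of_pow_mulVec_eq_zero hNx, Algebra.algebraMap_eq_smul_one,
    smul_mulVec, one_mulVec, Finset.smul_sum]
  refine Finset.sum_congr rfl fun k _ => ?_
  rw [_root_.smul_pow, smul_mulVec, smul_smul, smul_smul]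
  ring_nf

theorem tendsto_exp_smul_mulVec_of_pow_mulVec_eq_zero (A : Matrix n n ℂ) {μ : ℂ} (hμ : μ.re < 0)
    {x : n → ℂ} {K : ℕ} (hx : (A - μ • 1) ^ K *ᵥ x = 0) :
    Tendsto (fun t : ℝ => NormedSpace.exp ((t : ℂ) • A) *ᵥ x) atTop (𝓝 0) := by
  simp_rw [exp_smul_mulVec_eq_sum A μ hx]
  simpa using tendsto_finsetSum (Finset.range K) fun k _ =>
    ((Complex.tendsto_exp_mul_mul_pow_atTop_nhds_zero hμ k).div_const (k ! : ℂ)).smul_const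
      ((A - μ • 1) ^ k *ᵥ x)

theorem isRoot_charpoly_of_pow_mulVec_eq_zero {K : Type*} [Field K] {A : Matrix n n K} {μ : K}
    {x : n → K} {k : ℕ} (hx : (A - μ • 1) ^ k *ᵥ x = 0) (hx0 : x ≠ 0) : A.charpoly.IsRoot μ := by
  by_contra hμ
  have hunit : IsUnit (A - μ • 1) := by
    rw [← neg_sub, IsUnit.neg_iff, isUnit_iff_isUnit_det, isUnit_iff_ne_zero, smul_one_eq_diagonal,
      ← scalar_apply, ← eval_charpoly]
    exact hμ
  exact hx0 (mulVec_injective_iff_isUnit.mpr (hunit.pow k) (by rw [hx, mulVec_zero]))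

theorem mem_maxGenEigenspace_toLin'_iff {R : Type*} [CommRing R] {A : Matrix n n R} {μ : R}
    {x : n → R} :
    x ∈ Module.End.maxGenEigenspace (toLin' A) μ ↔ ∃ k : ℕ, (A - μ • 1) ^ k *ᵥ x = 0 := by
  simp only [Module.End.mem_maxGenEigenspace, ← toLin'_apply, toLin'_pow, map_sub, map_smul,
    toLin'_one, Module.End.one_eq_id]

theorem tendsto_nhds_zero_of_forall_mulVec {m R ι : Type*} [Fintype m] [DecidableEq m]
    [NonAssocSemiring R] [TopologicalSpace R] {l : Filter ι} {M : ι → Matrix m n R}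
    (h : ∀ x, Tendsto (fun i => M i *ᵥ x) l (𝓝 0)) : Tendsto M l (𝓝 0) := by
  refine tendsto_pi_nhds.mpr fun a => tendsto_pi_nhds.mpr fun b => ?_
  simpa [mulVec_single_one] using tendsto_pi_nhds.mp (h (Pi.single b 1)) a

end Matrix

theorem IsHurwitz.tendsto_exp_smul_mulVec {n : Type*} [Fintype n] [DecidableEq n]
    {A : Matrix n n ℂ} (hA : IsHurwitz A) (x : n → ℂ) :
    Tendsto (fun t : ℝ => NormedSpace.exp ((t : ℂ) • A) *ᵥ x) atTop (𝓝 0) := by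
  have hx : x ∈ ⨆ μ, Module.End.maxGenEigenspace (toLin' A) μ := by
    rw [Module.End.iSup_maxGenEigenspace_eq_top]
    trivial
  refine Submodule.iSup_induction _ hx (motive := fun x =>
      Tendsto (fun t : ℝ => NormedSpace.exp ((t : ℂ) • A) *ᵥ x) atTop (𝓝 0))
    (fun μ y hy => ?_) (by simp)
    fun y z hy hz => by simpa [mulVec_add] using hy.add hz
  obtain ⟨K, hK⟩ := mem_maxGenEigenspace_toLin'_iff.mp hy
  rcases eq_or_ne y 0 with rfl | hy0
  · simp
  exact tendsto_exp_smul_mulVec_of_pow_mulVec_eq_zero A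
    (hA μ (isRoot_charpoly_of_pow_mulVec_eq_zero hK hy0)) hK

/-- for a Hurwitz matrix `A`, the matrix exponential `exp(t·A)` tends to
zero as `t → ∞`; in particular `exp(t·A)·x₀ → 0` for every vector `x₀`. -/
theorem hurwitz_exp_tendsto_zero (m : ℕ) (A : Matrix (Fin m) (Fin m) ℂ)
    (hA : IsHurwitz A) :
    Tendsto (fun t : ℝ => NormedSpace.exp ((t : ℂ) • A)) atTop (nhds 0) ∧
    ∀ x₀ : Fin m → ℂ,
      Tendsto (fun t : ℝ => (NormedSpace.exp ((t : ℂ) • A)).mulVec x₀) atTop (nhds 0) :=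
  ⟨tendsto_nhds_zero_of_forall_mulVec hA.tendsto_exp_smul_mulVec, hA.tendsto_exp_smul_mulVec⟩
end

section
/- Let A be an m×m complex Hurwitz matrix, and let z : ℝ → ℂᵐ be a differentiable function satisfying z′(t) = −Aᴴ·z(t) for all t ≥ 0 and z(t) → 0 as t → ∞. Then z(t) = 0 for all t ≥ 0. -/
open Matrix Polynomial Filter Topology

/-! Pair the solution with a generalized eigenvector `u` of `A`, say `(A - μ)ᵏ u = 0`.
Since `⟪u, Aᴴ z⟫ = ⟪A u, z⟫`, the scalar `g = ⟪u, z⟫` satisfies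
`g' = -conj μ • g - ⟪(A - μ) u, z⟫`, and the last term vanishes by induction on `k`.
Hence `g(t) = exp(-conj μ t) g(0)` grows in modulus because `Re μ < 0`, so decay of `z`
forces `g = 0`. Generalized eigenvectors span `ℂⁿ`, so `z(t) = 0`. -/

theorem HasDerivAt.const_dotProduct {𝕜 R n : Type*} [NontriviallyNormedField 𝕜]
    [NormedCommRing R] [NormedAlgebra 𝕜 R] [Fintype n] {z : 𝕜 → n → R} {z' : n → R}
    {t : 𝕜} (hz : HasDerivAt z z' t) (v : n → R) :
    HasDerivAt (fun s => v ⬝ᵥ z s) (v ⬝ᵥ z') t := by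
  simpa [dotProduct] using HasDerivAt.fun_sum fun i _ => (hasDerivAt_pi.mp hz i).const_mul (v i)

theorem eq_cexp_mul_of_hasDerivAt {c : ℂ} {g : ℝ → ℂ}
    (hg : ∀ t, 0 ≤ t → HasDerivAt g (c * g t) t) {t : ℝ} (ht : 0 ≤ t) :
    g t = Complex.exp (c * t) * g 0 := by
  set h : ℝ → ℂ := fun s => Complex.exp (-c * s) * g s
  have hh : ∀ s, 0 ≤ s → HasDerivAt h 0 s := by
    intro s hs
    have hexp :
        HasDerivAt (fun s : ℝ => Complex.exp (-c * s)) (Complex.exp (-c * s) * -c) s := by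
      simpa using ((Complex.ofRealCLM.hasDerivAt (x := s)).const_mul (-c)).cexp
    exact (hexp.mul (hg s hs)).congr_deriv (by ring)
  have hconst : h t = h 0 :=
    constant_of_has_deriv_right_zero (fun s hs => (hh s hs.1).continuousAt.continuousWithinAt)
      (fun s hs => (hh s hs.1).hasDerivWithinAt) t ⟨ht, le_rfl⟩
  simp only [h, Complex.ofReal_zero, mul_zero, Complex.exp_zero, one_mul] at hconst
  rw [← hconst, ← mul_assoc, ← Complex.exp_add]
  simp

theorem eq_zero_of_hasDerivAt_of_tendsto_zero {c : ℂ} (hc : 0 < c.re) {g : ℝ → ℂ}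
    (hg : ∀ t, 0 ≤ t → HasDerivAt g (c * g t) t) (hlim : Tendsto g atTop (𝓝 0))
    {t : ℝ} (ht : 0 ≤ t) : g t = 0 := by
  have hgrowth : ∀ s, 0 ≤ s → ‖g 0‖ ≤ ‖g s‖ := by
    intro s hs
    rw [eq_cexp_mul_of_hasDerivAt hg hs, norm_mul, Complex.norm_exp]
    refine le_mul_of_one_le_left (norm_nonneg _) (Real.one_le_exp ?_)
    simpa using mul_nonneg hc.le hs
  have hg0 : ‖g 0‖ ≤ 0 := by
    simpa using ge_of_tendsto hlim.norm ((eventually_ge_atTop 0).mono hgrowth)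
  rw [eq_cexp_mul_of_hasDerivAt hg ht, norm_le_zero_iff.mp hg0, mul_zero]

theorem Matrix.star_dotProduct_conjTranspose_mulVec {n : Type*} [Fintype n]
    (A : Matrix n n ℂ) (u x : n → ℂ) : star u ⬝ᵥ (Aᴴ *ᵥ x) = star (A *ᵥ u) ⬝ᵥ x := by
  rw [dotProduct_mulVec, star_mulVec]

theorem IsHurwitz.re_neg_of_hasEigenvalue {n : Type*} [Fintype n] [DecidableEq n]
    {A : Matrix n n ℂ} (hA : IsHurwitz A) {μ : ℂ}
    (hμ : Module.End.HasEigenvalue (toLin' A) μ) : μ.re < 0 :=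
  hA μ <| by rwa [Module.End.hasEigenvalue_iff_isRoot_charpoly, Matrix.charpoly_toLin'] at hμ

section AdjointFlow

variable {n : Type*} [Fintype n] [DecidableEq n] {A : Matrix n n ℂ} {z : ℝ → n → ℂ}

theorem star_dotProduct_eq_zero_of_mem_genEigenspace (hA : IsHurwitz A)
    (hz : ∀ t, 0 ≤ t → HasDerivAt z (-(Aᴴ *ᵥ z t)) t) (hlim : Tendsto z atTop (𝓝 0))
    (μ : ℂ) (k : ℕ) :
    ∀ u ∈ Module.End.genEigenspace (toLin' A) μ k, ∀ t, 0 ≤ t → star u ⬝ᵥ z t = 0 := by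
  induction k with
  | zero => simp
  | succ k ih =>
    intro u hu
    rcases eq_or_ne u 0 with rfl | hu0
    · simp
    have hμ : μ.re < 0 := hA.re_neg_of_hasEigenvalue <|
      Module.End.hasEigenvalue_of_hasGenEigenvalue <| (Submodule.ne_bot_iff _).mpr ⟨u, hu, hu0⟩
    set v := (toLin' A - μ • 1) u with hv
    have hv0 : ∀ t, 0 ≤ t → star v ⬝ᵥ z t = 0 := by
      refine ih v (Module.End.mem_genEigenspace_nat.mpr ?_)
      rw [LinearMap.mem_ker, hv, ← Module.End.mul_apply, ← pow_succ]
      exact Module.End.mem_genEigenspace_nat.mp hu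
    have hAu : A *ᵥ u = v + μ • u := by simp [hv]
    intro t ht
    refine eq_zero_of_hasDerivAt_of_tendsto_zero (c := -star μ) (g := fun s => star u ⬝ᵥ z s)
      (by simpa using hμ) ?_ ?_ ht
    · intro s hs
      refine ((hz s hs).const_dotProduct (star u)).congr_deriv ?_
      rw [dotProduct_neg, star_dotProduct_conjTranspose_mulVec, hAu, star_add, add_dotProduct,
        hv0 s hs, star_smul, smul_dotProduct]
      simp
    · exact ((continuous_const.dotProduct continuous_id).tendsto' 0 0 (by simp)).comp hlim

theorem star_dotProduct_eq_zero (hA : IsHurwitz A)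
    (hz : ∀ t, 0 ≤ t → HasDerivAt z (-(Aᴴ *ᵥ z t)) t) (hlim : Tendsto z atTop (𝓝 0))
    (u : n → ℂ) {t : ℝ} (ht : 0 ≤ t) : star u ⬝ᵥ z t = 0 := by
  have hu : u ∈ ⨆ μ, Module.End.maxGenEigenspace (toLin' A) μ := by
    simp [Module.End.iSup_maxGenEigenspace_eq_top]
  refine Submodule.iSup_induction _ (motive := fun u => star u ⬝ᵥ z t = 0) hu ?_ (by simp) ?_
  · intro μ x hx
    obtain ⟨k, hk⟩ := (Module.End.mem_maxGenEigenspace _ μ x).mp hx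
    exact star_dotProduct_eq_zero_of_mem_genEigenspace hA hz hlim μ k x
      (Module.End.mem_genEigenspace_nat.mpr hk) t ht
  · intro x y hx hy
    rw [star_add, add_dotProduct, hx, hy, add_zero]

end AdjointFlow

/-- if `A` is Hurwitz and `z` is a differentiable solution of
`z′(t) = −Aᴴ·z(t)` for `t ≥ 0` with `z(t) → 0` as `t → ∞`, then `z(t) = 0`
for all `t ≥ 0`. -/
theorem hurwitz_adjoint_decaying_solution_zero (m : ℕ)
    (A : Matrix (Fin m) (Fin m) ℂ) (hA : IsHurwitz A)
    (z : ℝ → (Fin m → ℂ)) (hz : Differentiable ℝ z)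
    (hode : ∀ t : ℝ, 0 ≤ t → deriv z t = -(Aᴴ.mulVec (z t)))
    (hlim : Tendsto z atTop (nhds 0)) :
    ∀ t : ℝ, 0 ≤ t → z t = 0 := by
  intro t ht
  have hz' : ∀ t, 0 ≤ t → HasDerivAt z (-(Aᴴ *ᵥ z t)) t :=
    fun t ht => hode t ht ▸ (hz t).hasDerivAt
  open scoped ComplexOrder in
  exact dotProduct_star_self_eq_zero.mp (star_dotProduct_eq_zero hA hz' hlim (z t) ht)
end

section
/- Let A_c be an m×m complex Hurwitz matrix and B an arbitrary m×m complex matrix. Suppose Z₁, Z₂ : ℝ → ℂᵐ are differentiable functions satisfying Z₁′(t) = A_c·Z₁(t) + B·Z₂(t) and Z₂′(t) = −A_cᴴ·Z₂(t) for all t ≥ 0, and Z₂(t) → 0 as t → ∞. Then Z₂(t) = 0 for all t ≥ 0, Z₁(t) = exp(t·A_c)·Z₁(0) for all t ≥ 0, and Z₁(t) → 0 as t → ∞. -/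
open Matrix Polynomial Filter Topology

/-!
On `t ≥ 0` a solution of `f' = N f` is `exp (t N) (f 0)`, because `exp (-t N) (f t)` has zero
derivative. In particular `Z₂ 0 = exp (t Acᴴ) (Z₂ t)`. Since the eigenvalues of `Acᴴ` are the
conjugates of those of `Ac`, the matrix `Acᴴ` is Hurwitz too, so `exp (t Acᴴ) → 0` while
`Z₂ t → 0`; hence `Z₂ 0 = 0` and `Z₂ ≡ 0`. The first equation then reads `Z₁' = Ac Z₁`, so
`Z₁ t = exp (t Ac) (Z₁ 0) → 0`. The decay of `exp (t N) v` for `N` with spectrum in the open left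
half-plane is checked on each generalized eigenspace, where `exp (t N) v` is `e^{tμ}` times a
polynomial in `t`; these eigenspaces span the space because `ℂ` is algebraically closed.
-/

open NormedSpace Finset Nat

-- `NormedSpace.exp` on operators needs a `ℚ`-algebra structure, which Mathlib does not register.
noncomputable instance ContinuousLinearMap.normedAlgebraRat {𝕜 E : Type*}
    [NontriviallyNormedField 𝕜] [NormedAlgebra ℚ 𝕜] [NormedAddCommGroup E] [NormedSpace 𝕜 E] :
    NormedAlgebra ℚ (E →L[𝕜] E) :=
  NormedAlgebra.restrictScalars ℚ 𝕜 _

theorem ContinuousLinearMap.tendsto_nhds_zero_of_forall_tendsto_apply {α 𝕜 E F : Type*}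
    [NontriviallyNormedField 𝕜] [CompleteSpace 𝕜] [NormedAddCommGroup E] [NormedSpace 𝕜 E]
    [FiniteDimensional 𝕜 E] [NormedAddCommGroup F] [NormedSpace 𝕜 F] {l : Filter α}
    {u : α → E →L[𝕜] F} (h : ∀ x, Tendsto (fun a => u a x) l (𝓝 0)) : Tendsto u l (𝓝 0) := by
  let v := Module.finBasis 𝕜 E
  obtain ⟨C, -, hC⟩ := v.exists_opNorm_le (F := F)
  rw [tendsto_zero_iff_norm_tendsto_zero]
  refine squeeze_zero (fun _ => norm_nonneg _) (fun a => hC (by positivity) fun i =>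
    single_le_sum (f := fun i => ‖u a (v i)‖) (fun j _ => norm_nonneg _) (mem_univ i)) ?_
  simpa using (tendsto_finsetSum univ fun i _ => (h (v i)).norm).const_mul C

theorem NormedSpace.exp_mul_exp_neg {𝔸 : Type*} [NormedRing 𝔸] [NormedAlgebra ℚ 𝔸]
    [CompleteSpace 𝔸] (x : 𝔸) : exp x * exp (-x) = 1 := by
  rw [← exp_add_of_commute (Commute.refl x).neg_right, add_neg_cancel, exp_zero]

theorem tendsto_ofReal_pow_mul_exp_atTop_of_re_neg {μ : ℂ} (hμ : μ.re < 0) (j : ℕ) :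
    Tendsto (fun t : ℝ => (t : ℂ) ^ j * Complex.exp (t * μ)) atTop (𝓝 0) := by
  rw [tendsto_zero_iff_norm_tendsto_zero]
  refine (tendsto_rpow_mul_exp_neg_mul_atTop_nhds_zero j (-μ.re) (neg_pos.2 hμ)).congr' ?_
  filter_upwards [eventually_ge_atTop 0] with t ht
  simp [Complex.norm_exp, abs_of_nonneg ht, Real.rpow_natCast, mul_comm]

section

variable {E : Type*} [NormedAddCommGroup E] [NormedSpace ℂ E]

theorem exp_apply_eq_sum_of_pow_apply_eq_zero [CompleteSpace E] {M : E →L[ℂ] E} {k : ℕ} {w : E}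
    (hw : (M ^ k) w = 0) : exp M w = ∑ j ∈ range k, (j ! : ℂ)⁻¹ • (M ^ j) w := by
  have h := (exp_series_hasSum_exp' (𝕂 := ℂ) M).mapL (ContinuousLinearMap.apply ℂ E w)
  simp only [ContinuousLinearMap.apply_apply, _root_.smul_apply] at h
  refine h.unique (hasSum_sum_of_ne_finset_zero fun n hn => ?_)
  obtain ⟨d, rfl⟩ := Nat.exists_eq_add_of_le (not_lt.1 (mt mem_range.2 hn))
  rw [add_comm, pow_add, mul_apply_eq_comp, hw, map_zero, smul_zero]

theorem exp_smul_apply_eq_sum_of_pow_sub_apply_eq_zero [CompleteSpace E] {N : E →L[ℂ] E} {μ : ℂ}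
    {k : ℕ} {w : E} (hw : ((N - μ • 1) ^ k) w = 0) (z : ℂ) :
    exp (z • N) w =
      ∑ j ∈ range k, ((j ! : ℂ)⁻¹ * (z ^ j * Complex.exp (z * μ))) • ((N - μ • 1) ^ j) w := by
  have hsplit : z • N = z • (N - μ • 1) + algebraMap ℂ (E →L[ℂ] E) (z * μ) := by
    rw [Algebra.algebraMap_eq_smul_one, smul_sub, smul_smul, sub_add_cancel]
  have hnil : ((z • (N - μ • 1)) ^ k) w = 0 := by
    rw [_root_.smul_pow, _root_.smul_apply, hw, smul_zero]
  rw [hsplit, NormedSpace.exp_add_of_commute (Algebra.commutes _ _).symm, ← algebraMap_exp_comm,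
    ← Complex.exp_eq_exp_ℂ, mul_apply_eq_comp, ContinuousLinearMap.algebraMap_apply,
    map_smul, exp_apply_eq_sum_of_pow_apply_eq_zero hnil, smul_sum]
  refine sum_congr rfl fun j _ => ?_
  rw [_root_.smul_pow, _root_.smul_apply, smul_smul, smul_smul]
  congr 1
  ring

theorem tendsto_exp_smul_apply_atTop_of_hasEigenvalue_re_neg [FiniteDimensional ℂ E]
    {N : E →L[ℂ] E} (hN : ∀ μ : ℂ, Module.End.HasEigenvalue (N : Module.End ℂ E) μ → μ.re < 0)
    (v : E) :
    Tendsto (fun t : ℝ => exp ((t : ℂ) • N) v) atTop (𝓝 0) := by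
  have hv : v ∈ ⨆ μ, Module.End.maxGenEigenspace (N : Module.End ℂ E) μ := by
    rw [Module.End.iSup_maxGenEigenspace_eq_top]; trivial
  refine Submodule.iSup_induction _
    (motive := fun v => Tendsto (fun t : ℝ => exp ((t : ℂ) • N) v) atTop (𝓝 0)) hv
    (fun μ w hw => ?_) (by simp) fun x y hx hy => by simpa using hx.add hy
  obtain ⟨k, hk⟩ := (Module.End.mem_maxGenEigenspace _ _ _).1 hw
  rcases eq_or_ne w 0 with rfl | hw0
  · simp
  have hμ : μ.re < 0 := hN μ <| Module.End.hasEigenvalue_of_hasGenEigenvalue (k := k) <|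
    (Submodule.ne_bot_iff _).2 ⟨w, Module.End.mem_genEigenspace_nat.2 hk, hw0⟩
  rw [show (N : Module.End ℂ E) - μ • 1 = ((N - μ • 1 : E →L[ℂ] E) : Module.End ℂ E) from rfl,
    ← ContinuousLinearMap.toLinearMap_pow] at hk
  simp_rw [exp_smul_apply_eq_sum_of_pow_sub_apply_eq_zero hk]
  simpa using tendsto_finsetSum (range k) fun j _ =>
    ((tendsto_ofReal_pow_mul_exp_atTop_of_re_neg hμ j).const_mul (j ! : ℂ)⁻¹).smul_const
      (((N - μ • 1) ^ j) w)

theorem eq_exp_smul_apply_of_hasDerivAt [CompleteSpace E] {N : E →L[ℂ] E} {f : ℝ → E}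
    (hf : ∀ t, 0 ≤ t → HasDerivAt f (N (f t)) t) {t : ℝ} (ht : 0 ≤ t) :
    f t = exp ((t : ℂ) • N) (f 0) := by
  set g : ℝ → E := fun s => exp ((s : ℂ) • -N) (f s)
  have hg : ∀ s, 0 ≤ s → HasDerivAt g 0 s := by
    intro s hs
    have hexp := (hasDerivAt_exp_smul_const (-N) (s : ℂ)).scomp s Complex.ofRealCLM.hasDerivAt
    -- the evaluation map `(E →L[ℂ] E) × E → E`, seen as `ℝ`-bilinear
    have := (ContinuousLinearMap.restrictScalarsL ℂ E E ℝ ℝ).hasDerivAt_of_bilinear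
      (fun _ => hexp) (fun _ => hf s hs)
    simpa [g, mul_apply_eq_comp] using this
  have hconst : g t = g 0 := constant_of_has_deriv_right_zero
    (fun x hx => (hg x hx.1).continuousAt.continuousWithinAt)
    (fun x hx => (hg x hx.1).hasDerivWithinAt) t ⟨ht, le_rfl⟩
  calc f t = (exp ((t : ℂ) • N) * exp ((t : ℂ) • -N)) (f t) := by
        rw [smul_neg, exp_mul_exp_neg]; rfl
    _ = exp ((t : ℂ) • N) (g 0) := by rw [← hconst]; rfl
    _ = exp ((t : ℂ) • N) (f 0) := by simp [g]

theorem eq_zero_of_hasDerivAt_neg_apply_of_tendsto [FiniteDimensional ℂ E] {N : E →L[ℂ] E}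
    (hN : ∀ μ : ℂ, Module.End.HasEigenvalue (N : Module.End ℂ E) μ → μ.re < 0) {f : ℝ → E}
    (hf : ∀ t, 0 ≤ t → HasDerivAt f (-N (f t)) t) (hlim : Tendsto f atTop (𝓝 0)) {t : ℝ}
    (ht : 0 ≤ t) : f t = 0 := by
  have hf' : ∀ s, 0 ≤ s → f s = exp ((s : ℂ) • -N) (f 0) :=
    fun s hs => eq_exp_smul_apply_of_hasDerivAt hf hs
  have hback : ∀ s : ℝ, 0 ≤ s → exp ((s : ℂ) • N) (f s) = f 0 := fun s hs => by
    rw [hf' s hs, ← mul_apply_eq_comp, smul_neg, exp_mul_exp_neg]; rfl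
  have hdecay : Tendsto (fun s : ℝ => exp ((s : ℂ) • N) (f s)) atTop (𝓝 0) := by
    simpa [Function.comp_def] using (isBoundedBilinearMap_apply.continuous.tendsto (0, 0)).comp
      ((ContinuousLinearMap.tendsto_nhds_zero_of_forall_tendsto_apply
        (tendsto_exp_smul_apply_atTop_of_hasEigenvalue_re_neg hN)).prodMk_nhds hlim)
  have hf0 : f 0 = 0 := tendsto_nhds_unique
    (tendsto_const_nhds.congr' ((eventually_ge_atTop 0).mono fun s hs => (hback s hs).symm))
    hdecay
  rw [hf' t ht, hf0, map_zero]

end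

namespace Matrix

variable {n : Type*} [Fintype n] [DecidableEq n]

noncomputable def toContinuousLinearMap' : Matrix n n ℂ ≃ₐ[ℂ] ((n → ℂ) →L[ℂ] (n → ℂ)) :=
  toLinAlgEquiv'.trans (Module.End.toContinuousLinearMap _)

@[simp]
theorem toContinuousLinearMap'_apply (A : Matrix n n ℂ) (v : n → ℂ) :
    toContinuousLinearMap' A v = A *ᵥ v :=
  rfl

theorem toLinearMap_toContinuousLinearMap' (A : Matrix n n ℂ) :
    (toContinuousLinearMap' A : Module.End ℂ (n → ℂ)) = toLin' A :=
  rfl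

theorem continuous_toContinuousLinearMap' :
    Continuous (toContinuousLinearMap' : Matrix n n ℂ → _) :=
  LinearMap.continuous_of_finiteDimensional (toContinuousLinearMap' (n := n)).toLinearMap

theorem exp_mulVec (A : Matrix n n ℂ) (v : n → ℂ) :
    exp A *ᵥ v = exp (toContinuousLinearMap' A) v := by
  -- `map_exp` needs a Banach algebra structure; the operator norm induces the usual topology
  let : NormedRing (Matrix n n ℂ) := Matrix.linftyOpNormedRing
  let : NormedAlgebra ℂ (Matrix n n ℂ) := Matrix.linftyOpNormedAlgebra
  let : NormedAlgebra ℚ (Matrix n n ℂ) := NormedAlgebra.restrictScalars ℚ ℂ _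
  rw [← map_exp _ continuous_toContinuousLinearMap', toContinuousLinearMap'_apply]
  rfl

end Matrix

namespace IsHurwitz

variable {n : Type*} [Fintype n] [DecidableEq n] {A : Matrix n n ℂ}

theorem conjTranspose (hA : IsHurwitz A) : IsHurwitz Aᴴ := by
  intro μ hμ
  rw [Matrix.conjTranspose, transpose_map, charpoly_transpose,
    show star = ⇑(starRingEnd ℂ) from rfl, charpoly_map, IsRoot, ← Complex.conj_conj μ,
    eval_map_apply, map_eq_zero] at hμ
  simpa using hA _ hμ

theorem re_neg_of_hasEigenvalue_s7 (hA : IsHurwitz A) (μ : ℂ)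
    (hμ : Module.End.HasEigenvalue (toContinuousLinearMap' A : Module.End ℂ (n → ℂ)) μ) :
    μ.re < 0 :=
  hA μ (by
    rwa [toLinearMap_toContinuousLinearMap', Module.End.hasEigenvalue_iff_isRoot_charpoly,
      charpoly_toLin'] at hμ)

end IsHurwitz

/-- for `A_c` Hurwitz, if `Z₁′ = A_c·Z₁ + B·Z₂`, `Z₂′ = −A_cᴴ·Z₂` on
`t ≥ 0` and `Z₂(t) → 0` as `t → ∞`, then `Z₂ ≡ 0` on `t ≥ 0`,
`Z₁(t) = exp(t·A_c)·Z₁(0)`, and `Z₁(t) → 0`. -/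
theorem triangular_bvp_solution (m : ℕ)
    (Ac B : Matrix (Fin m) (Fin m) ℂ) (hAc : IsHurwitz Ac)
    (Z₁ Z₂ : ℝ → (Fin m → ℂ))
    (hZ₁ : Differentiable ℝ Z₁) (hZ₂ : Differentiable ℝ Z₂)
    (hode₁ : ∀ t : ℝ, 0 ≤ t → deriv Z₁ t = Ac.mulVec (Z₁ t) + B.mulVec (Z₂ t))
    (hode₂ : ∀ t : ℝ, 0 ≤ t → deriv Z₂ t = -(Acᴴ.mulVec (Z₂ t)))
    (hlim : Tendsto Z₂ atTop (nhds 0)) :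
    (∀ t : ℝ, 0 ≤ t → Z₂ t = 0) ∧
    (∀ t : ℝ, 0 ≤ t → Z₁ t = (NormedSpace.exp ((t : ℂ) • Ac)).mulVec (Z₁ 0)) ∧
    Tendsto Z₁ atTop (nhds 0) := by
  have hZ₂_zero : ∀ t : ℝ, 0 ≤ t → Z₂ t = 0 := fun t ht =>
    eq_zero_of_hasDerivAt_neg_apply_of_tendsto hAc.conjTranspose.re_neg_of_hasEigenvalue_s7
      (fun s hs => by simpa [← hode₂ s hs] using (hZ₂ s).hasDerivAt) hlim ht
  have hZ₁_exp : ∀ t : ℝ, 0 ≤ t → Z₁ t = exp ((t : ℂ) • toContinuousLinearMap' Ac) (Z₁ 0) :=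
    fun t ht => eq_exp_smul_apply_of_hasDerivAt (fun s hs => by
      simpa [hode₁ s hs, hZ₂_zero s hs] using (hZ₁ s).hasDerivAt) ht
  refine ⟨hZ₂_zero, fun t ht => by rw [hZ₁_exp t ht, exp_mulVec, map_smul], ?_⟩
  exact (tendsto_exp_smul_apply_atTop_of_hasEigenvalue_re_neg hAc.re_neg_of_hasEigenvalue_s7
    (Z₁ 0)).congr' ((eventually_ge_atTop 0).mono fun t ht => (hZ₁_exp t ht).symm)
end

section
/- For every natural number p, the function f : ℝ → ℝ defined by f(v) = exp(−v²/4)·He_p(v) satisfies f″(v) + (1/2 − v²/4)·f(v) = −p·f(v) for all real v. In other words, f is an eigenfunction with eigenvalue −p of the operator f ↦ f″ + (1/2 − v²/4)f. -/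
/-!
Conjugating by the Gaussian weight `exp (-v²/4)` turns the operator `f ↦ f″ + (1/2 - v²/4) f`
into the Hermite operator `g ↦ g″ - v g′`, and `He_p` is an eigenfunction of the latter with
eigenvalue `-p`: differentiating `He_p′ = X He_p - He_{p+1}` and using `He_{p+1}′ = (p+1) He_p`
gives `He_p″ - X He_p′ = -p He_p`.
-/

open Polynomial

namespace Polynomial

theorem derivative_hermite_succ (n : ℕ) :
    derivative (hermite (n + 1)) = (n + 1 : ℤ[X]) * hermite n := by
  induction n with
  | zero => simp [hermite_zero]
  | succ n ih =>
    rw [hermite_succ (n + 1), derivative_sub, derivative_mul, ih, derivative_mul, derivative_X,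
      show derivative (hermite n) = X * hermite n - hermite (n + 1) by rw [hermite_succ]; ring]
    simp only [derivative_add, derivative_natCast, derivative_one]
    push_cast
    ring

theorem derivative_derivative_hermite (n : ℕ) :
    derivative (derivative (hermite n)) = X * derivative (hermite n) - (n : ℤ[X]) * hermite n := by
  have h : derivative (hermite n) = X * hermite n - hermite (n + 1) := by
    rw [hermite_succ]; ring
  calc derivative (derivative (hermite n))
      = hermite n + X * derivative (hermite n) - derivative (hermite (n + 1)) := by
        rw [h, derivative_sub, derivative_mul, derivative_X, ← h, one_mul]
    _ = X * derivative (hermite n) - (n : ℤ[X]) * hermite n := by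
        rw [derivative_hermite_succ]; ring

end Polynomial

theorem hasDerivAt_exp_neg_sq_div_four_mul {g : ℝ → ℝ} {g' v : ℝ} (hg : HasDerivAt g g' v) :
    HasDerivAt (fun w => Real.exp (-w ^ 2 / 4) * g w)
      (Real.exp (-v ^ 2 / 4) * (g' - v / 2 * g v)) v := by
  have hsq : HasDerivAt (fun w : ℝ => -w ^ 2 / 4) (-v / 2) v :=
    ((hasDerivAt_pow 2 v).neg.div_const 4).congr_deriv (by push_cast; ring)
  exact (hsq.exp.mul hg).congr_deriv (by ring)

theorem deriv_deriv_exp_neg_sq_div_four_mul_add {g g' g'' : ℝ → ℝ}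
    (hg : ∀ w, HasDerivAt g (g' w) w) (hg' : ∀ w, HasDerivAt g' (g'' w) w) (v : ℝ) :
    deriv (deriv (fun w => Real.exp (-w ^ 2 / 4) * g w)) v +
        (1 / 2 - v ^ 2 / 4) * (Real.exp (-v ^ 2 / 4) * g v) =
      Real.exp (-v ^ 2 / 4) * (g'' v - v * g' v) := by
  have hd : deriv (fun w => Real.exp (-w ^ 2 / 4) * g w) =
      fun w => Real.exp (-w ^ 2 / 4) * (g' w - w / 2 * g w) :=
    funext fun w => (hasDerivAt_exp_neg_sq_div_four_mul (hg w)).deriv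
  have hd' : HasDerivAt (fun w => g' w - w / 2 * g w) (g'' v - (1 / 2 * g v + v / 2 * g' v)) v :=
    (hg' v).sub (((hasDerivAt_id v).div_const 2).mul (hg v) |>.congr_deriv (by simp))
  rw [hd, (hasDerivAt_exp_neg_sq_div_four_mul hd').deriv]
  ring

/-- the parabolic cylinder function `D_p(v) = exp(−v²/4)·He_p(v)` is an
eigenfunction with eigenvalue `−p` of the operator `f ↦ f″ + (1/2 − v²/4)·f`. -/
theorem parabolic_cylinder_eigenfunction (p : ℕ) (v : ℝ) :
    deriv (deriv (fun w : ℝ => Real.exp (-w ^ 2 / 4) * aeval w (hermite p))) v +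
      (1 / 2 - v ^ 2 / 4) * (Real.exp (-v ^ 2 / 4) * aeval v (hermite p)) =
    -(p : ℝ) * (Real.exp (-v ^ 2 / 4) * aeval v (hermite p)) := by
  rw [deriv_deriv_exp_neg_sq_div_four_mul_add (hermite p).hasDerivAt_aeval
    (derivative (hermite p)).hasDerivAt_aeval, derivative_derivative_hermite]
  simp only [map_sub, map_mul, aeval_X, map_natCast]
  ring
end

section
/- Let σ > 0, r > 0, ξ ∈ ℝ, and p ∈ ℕ. Define f : ℝ → ℝ by f(u) = exp(−(u−ξ)²/(2·√r·σ²))·He_p(√2·(u−ξ)/(r^{1/4}·σ)). Then f is twice differentiable and, for all real u, (((u−ξ)² − √r·σ²)/(2·r·σ²))·f(u) − (σ²/2)·f″(u) = (p/√r)·f(u). That is, f is an eigenfunction of the self-adjoint local operator L̃_loc of the linearized mean-field game with eigenvalue p/√r. -/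
/-!
The affine substitution `y = √2 (u - ξ) / (r^{1/4} σ)` turns `f` into the Hermite function
`g(y) = e^{-y²/4} He_p(y)` and `L̃_loc` into `(1/√r) (-g'' + (y²/4 - 1/2) g)`. Differentiating
`He_{p+1} = X He_p - He_p'` and using `He_{p+1}' = (p+1) He_p` gives the Hermite equation
`He_p'' = X He_p' - p He_p`, which is exactly `g'' = (y²/4 - 1/2 - p) g`.
-/

open Polynomial

open Real

theorem hasDerivAt_exp_mul_aeval {R : Type*} [CommRing R] [Algebra R ℝ] (q : R[X]) (y : ℝ) :
    HasDerivAt (fun y => exp (-y ^ 2 / 4) * aeval y q)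
      (exp (-y ^ 2 / 4) * aeval y (2 * derivative q - X * q) / 2) y := by
  have hexp : HasDerivAt (fun y : ℝ => -y ^ 2 / 4) (-y / 2) y :=
    ((hasDerivAt_pow 2 y).neg.div_const 4).congr_deriv (by ring)
  refine (hexp.exp.mul (q.hasDerivAt_aeval y)).congr_deriv ?_
  simp only [map_sub, map_mul, aeval_X, map_ofNat]
  ring

noncomputable def hermiteFunction (n : ℕ) (y : ℝ) : ℝ := exp (-y ^ 2 / 4) * aeval y (hermite n)

theorem deriv_hermiteFunction (n : ℕ) : deriv (hermiteFunction n) =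
    fun y => exp (-y ^ 2 / 4) * aeval y (2 * derivative (hermite n) - X * hermite n) / 2 :=
  funext fun y => (hasDerivAt_exp_mul_aeval _ y).deriv

theorem differentiable_hermiteFunction (n : ℕ) : Differentiable ℝ (hermiteFunction n) :=
  fun y => (hasDerivAt_exp_mul_aeval _ y).differentiableAt

theorem hasDerivAt_deriv_hermiteFunction (n : ℕ) (y : ℝ) :
    HasDerivAt (deriv (hermiteFunction n)) ((y ^ 2 / 4 - 1 / 2 - n) * hermiteFunction n y) y := by
  rw [deriv_hermiteFunction]
  refine ((hasDerivAt_exp_mul_aeval (2 * derivative (hermite n) - X * hermite n) y).div_const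
    2).congr_deriv ?_
  simp only [derivative_sub, derivative_mul, derivative_X, derivative_ofNat, zero_mul, zero_add,
    one_mul, derivative_derivative_hermite, hermiteFunction]
  simp only [map_add, map_sub, map_mul, aeval_X, map_ofNat, map_natCast]
  ring

theorem differentiable_deriv_hermiteFunction (n : ℕ) :
    Differentiable ℝ (deriv (hermiteFunction n)) :=
  fun y => (hasDerivAt_deriv_hermiteFunction n y).differentiableAt

theorem deriv_comp_mul_sub (g : ℝ → ℝ) (b ξ u : ℝ) :
    deriv (fun u => g (b * (u - ξ))) u = b * deriv g (b * (u - ξ)) := by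
  rw [deriv_comp_sub_const (f := fun x => g (b * x)), deriv_comp_mul_left, smul_eq_mul]

theorem deriv_deriv_comp_mul_sub (g : ℝ → ℝ) (b ξ u : ℝ) :
    deriv (deriv fun u => g (b * (u - ξ))) u = b ^ 2 * deriv (deriv g) (b * (u - ξ)) := by
  simp only [funext (deriv_comp_mul_sub g b ξ), deriv_const_mul_field, deriv_comp_mul_sub]
  ring

theorem rpow_one_fourth_sq {r : ℝ} (hr : 0 ≤ r) : (r ^ ((1 : ℝ) / 4)) ^ 2 = √r := by
  rw [← Real.rpow_natCast, ← Real.rpow_mul hr, Real.sqrt_eq_rpow]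
  norm_num

/-- eigenfunctions of the self-adjoint local operator `L̃_loc` of the
linearized mean-field game. The function
`f(u) = exp(−(u−ξ)²/(2√r·σ²))·He_p(√2(u−ξ)/(r^{1/4}σ))` is twice differentiable
and satisfies `(((u−ξ)² − √r·σ²)/(2rσ²))·f − (σ²/2)·f″ = (p/√r)·f`. -/
theorem mfg_local_operator_eigenfunction (σ r ξ : ℝ) (hσ : 0 < σ) (hr : 0 < r) (p : ℕ)
    (f : ℝ → ℝ)
    (hf : ∀ u : ℝ, f u = Real.exp (-(u - ξ) ^ 2 / (2 * Real.sqrt r * σ ^ 2)) *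
      aeval (Real.sqrt 2 * (u - ξ) / (r ^ ((1 : ℝ) / 4) * σ)) (hermite p)) :
    Differentiable ℝ f ∧ Differentiable ℝ (deriv f) ∧
    ∀ u : ℝ,
      (((u - ξ) ^ 2 - Real.sqrt r * σ ^ 2) / (2 * r * σ ^ 2)) * f u -
        (σ ^ 2 / 2) * deriv (deriv f) u =
      ((p : ℝ) / Real.sqrt r) * f u := by
  have hb : (√2 / (r ^ ((1 : ℝ) / 4) * σ)) ^ 2 = 2 / (√r * σ ^ 2) := by
    rw [div_pow, mul_pow, rpow_one_fourth_sq hr.le, Real.sq_sqrt zero_le_two]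
  obtain rfl : f = fun u => hermiteFunction p (√2 / (r ^ ((1 : ℝ) / 4) * σ) * (u - ξ)) := by
    funext u
    rw [hf, hermiteFunction, mul_pow, hb, div_mul_eq_mul_div √2]
    congr 2
    field_simp
    norm_num
  generalize √2 / (r ^ ((1 : ℝ) / 4) * σ) = b at hb ⊢
  refine ⟨(differentiable_hermiteFunction p).comp (by fun_prop), ?_, fun u => ?_⟩
  · rw [funext (deriv_comp_mul_sub _ b ξ)]
    exact ((differentiable_deriv_hermiteFunction p).comp (by fun_prop)).const_mul b
  · rw [deriv_deriv_comp_mul_sub, (hasDerivAt_deriv_hermiteFunction p _).deriv, mul_pow, hb]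
    field_simp
    rw [Real.sq_sqrt hr.le]
    ring
end

section
/- Let r > 0, σ ∈ ℝ, and ξ ∈ ℝ, and define h : ℝ → ℝ by h(u) = √r·(u−ξ)² and the constant χ = σ²·√r. Then for all real u, χ − (ξ − u)² − 0 + (1/(4r))·(h′(u))² − (σ²/2)·h″(u) = 0; that is, the pair (h, χ) satisfies the stationary Hamilton–Jacobi–Bellman equation χ − c(u) + (1/(4r))(h′)² − (σ²/2)h″ = 0 with cost c(u) = (G(ξ) − u)² evaluated at a fixed point G(ξ) = ξ. -/
lemma deriv_sq (r ξ : ℝ) :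
    deriv (fun w : ℝ => Real.sqrt r * (w - ξ) ^ 2) =
    fun u => Real.sqrt r * (2 * (u - ξ)) := by
  funext u
  have : (fun w : ℝ => Real.sqrt r * (w - ξ) ^ 2) =
      fun w : ℝ => Real.sqrt r * (w - ξ) ^ 2 := rfl
  rw [deriv_const_mul _ (by fun_prop)]
  have h1 : deriv (fun w : ℝ => (w - ξ) ^ 2) u = 2 * (u - ξ) := by
    have := ((hasDerivAt_id u).sub_const ξ).pow 2
    simpa using this.deriv
  rw [h1]

/-- the pair `h(u) = √r·(u−ξ)²`, `χ = σ²·√r` satisfies the stationary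
Hamilton–Jacobi–Bellman equation `χ − (ξ−u)² − 0 + (1/(4r))·(h′)² − (σ²/2)·h″ = 0`
of the mean-field game Czirók model at a fixed point `G(ξ) = ξ`. -/
theorem mfg_stationary_hjb (r σ ξ : ℝ) (hr : 0 < r) (u : ℝ) :
    σ ^ 2 * Real.sqrt r - (ξ - u) ^ 2 - 0 +
      (1 / (4 * r)) * (deriv (fun w : ℝ => Real.sqrt r * (w - ξ) ^ 2) u) ^ 2 -
      (σ ^ 2 / 2) * deriv (deriv (fun w : ℝ => Real.sqrt r * (w - ξ) ^ 2)) u = 0 := by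
  rw [deriv_sq]
  have h2 : deriv (fun u : ℝ => Real.sqrt r * (2 * (u - ξ))) u = Real.sqrt r * 2 := by
    rw [deriv_const_mul _ (by fun_prop)]
    have := ((hasDerivAt_id u).sub_const ξ).const_mul (2:ℝ)
    simpa using this.deriv
  rw [h2]
  have hs : Real.sqrt r ^ 2 = r := Real.sq_sqrt hr.le
  have hrne : r ≠ 0 := hr.ne'
  rw [mul_pow, hs]
  field_simp
  ring
end

section
/- Let r > 0, σ ≠ 0, and ξ ∈ ℝ. Define F : ℝ → ℝ by F(u) = exp(−(u−ξ)²/(√r·σ²)) and h : ℝ → ℝ by h(u) = √r·(u−ξ)². Then for all real u, (1/(2r))·(d/du)(F(u)·h′(u)) + (σ²/2)·F″(u) = 0; that is, the Gaussian F is a stationary solution of the Fokker–Planck equation under the optimal feedback control α = −(1/(2r))·h′. -/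
/-!
The equation is the derivative of the probability flux `J = a·F·h′ + D·F′`
(`a = 1/(2r)`, `D = σ²/2`). For the Gibbs density `F = exp(−(a/D)·h)` one has
`D·F′ = −a·F·h′`, so the flux vanishes identically; and since `a/D · √r(u−ξ)² = (u−ξ)²/(√r·σ²)`,
the given Gaussian is that Gibbs density for `h(u) = √r·(u−ξ)²`.
-/

open Real

theorem deriv_exp_neg_mul_comp {h : ℝ → ℝ} (κ : ℝ) (hh : Differentiable ℝ h) :
    deriv (fun w => exp (-κ * h w)) = fun w => -κ * (exp (-κ * h w) * deriv h w) := by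
  funext w
  rw [((hh w).hasDerivAt.const_mul (-κ)).exp.deriv]
  ring

theorem stationary_fokker_planck_gibbs {h : ℝ → ℝ} {a D : ℝ} (hD : D ≠ 0)
    (hh : Differentiable ℝ h) (u : ℝ) :
    a * deriv (fun w => exp (-(a / D) * h w) * deriv h w) u +
      D * deriv (deriv fun w => exp (-(a / D) * h w)) u = 0 := by
  rw [deriv_exp_neg_mul_comp _ hh, deriv_const_mul_field']
  field_simp
  ring

theorem mfg_stationary_fokker_planck_general (r σ ξ : ℝ) (hσ : σ ≠ 0) (u : ℝ) :
    (1 / (2 * r)) *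
        deriv (fun w : ℝ => Real.exp (-(w - ξ) ^ 2 / (Real.sqrt r * σ ^ 2)) *
          deriv (fun v : ℝ => Real.sqrt r * (v - ξ) ^ 2) w) u +
      (σ ^ 2 / 2) *
        deriv (deriv (fun w : ℝ => Real.exp (-(w - ξ) ^ 2 / (Real.sqrt r * σ ^ 2)))) u = 0 := by
  have hExponent : ∀ w : ℝ,
      -(w - ξ) ^ 2 / (√r * σ ^ 2) = -((1 / (2 * r)) / (σ ^ 2 / 2)) * (√r * (w - ξ) ^ 2) := by
    intro w
    calc -(w - ξ) ^ 2 / (√r * σ ^ 2) = -(1 / √r) * (w - ξ) ^ 2 / σ ^ 2 := by ring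
      _ = -(√r / r) * (w - ξ) ^ 2 / σ ^ 2 := by rw [sqrt_div_self']
      _ = _ := by field_simp
  simp only [hExponent]
  exact stationary_fokker_planck_gibbs (h := fun v => √r * (v - ξ) ^ 2) (by positivity)
    (by fun_prop) u

/-- the Gaussian `F(u) = exp(−(u−ξ)²/(√r·σ²))` is a stationary solution
of the Fokker–Planck equation under the optimal feedback control
`α = −(1/(2r))·h′` with `h(u) = √r·(u−ξ)²`:
`(1/(2r))·(F·h′)′ + (σ²/2)·F″ = 0`. -/
theorem mfg_stationary_fokker_planck (r σ ξ : ℝ) (hr : 0 < r) (hσ : σ ≠ 0) (u : ℝ) :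
    (1 / (2 * r)) *
        deriv (fun w : ℝ => Real.exp (-(w - ξ) ^ 2 / (Real.sqrt r * σ ^ 2)) *
          deriv (fun v : ℝ => Real.sqrt r * (v - ξ) ^ 2) w) u +
      (σ ^ 2 / 2) *
        deriv (deriv (fun w : ℝ => Real.exp (-(w - ξ) ^ 2 / (Real.sqrt r * σ ^ 2)))) u = 0 :=
  mfg_stationary_fokker_planck_general r σ ξ hσ u
end
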